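/- In any subgame perfect equilibrium with the same game as the ∞pede, no strategy subprofile has the current agent choosing 2 (push) while the next agent chooses 1 (take): there are no profiles s_n = ⟨A, 2, ⟨A↦2^(2n+2), B↦2^(2n)⟩, ⟨B, 1, ⟨A↦2^(2n+1), B↦2^(2n+3)⟩, σ_n⟩⟩ with SPE(s_n). -/

import Mathlib

noncomputable section

/-- The two agents. -/
inductive Ag : Type
  | A
  | B
deriving DecidableEq

/-- The set of choices `{1, 2}`. -/
inductive Choice : Type
  | one
  | two
deriving DecidableEq

/-- The polynomial functor whose final coalgebra is the set of finite or
infinite strategy profiles: a node is either an ending position carrying a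
utility assignment (no children) or an internal position carrying an agent
and a choice (two children, indexed by `Bool`). -/
def SPF (Agent : Type) : PFunctor.{0} :=
  ⟨(Agent → ℝ) ⊕ (Agent × Choice), fun x => Sum.rec (fun _ => Empty) (fun _ => Bool) x⟩

/-- Finite or infinite strategy profiles, as the M-type (final coalgebra). -/
def StratProf (Agent : Type) : Type :=
  (SPF Agent).M

/-- The ending position `⟨u⟩`. -/
def leafP {Agent : Type} (u : Agent → ℝ) : StratProf Agent :=
  PFunctor.M.mk ⟨Sum.inl u, fun e => Empty.elim e⟩

/-- The strategy profile `⟨a, c, s₁, s₂⟩`. -/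
def nodeP {Agent : Type} (a : Agent) (c : Choice) (s₁ s₂ : StratProf Agent) :
    StratProf Agent :=
  PFunctor.M.mk ⟨Sum.inr (a, c), fun b => bif b then s₂ else s₁⟩

/-- The child selected by choice `c`. -/
def cchild {Agent : Type} (c : Choice) (s₁ s₂ : StratProf Agent) : StratProf Agent :=
  match c with
  | .one => s₁
  | .two => s₂

/-- `conv s`: following the choices of `s` reaches an ending position after
finitely many steps (inductive definition). -/
inductive Conv {Agent : Type} : StratProf Agent → Prop
  | leaf (u : Agent → ℝ) : Conv (leafP u)
  | node1 (a : Agent) (s₁ s₂ : StratProf Agent) :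
      Conv s₁ → Conv (nodeP a Choice.one s₁ s₂)
  | node2 (a : Agent) (s₁ s₂ : StratProf Agent) :
      Conv s₂ → Conv (nodeP a Choice.two s₁ s₂)

/-- The graph of the (partial) utility assignment `ŝ`:
`UtilR s u` holds iff following the choices of `s` reaches the ending
position `⟨u⟩`. -/
inductive UtilR {Agent : Type} : StratProf Agent → (Agent → ℝ) → Prop
  | leaf (u : Agent → ℝ) : UtilR (leafP u) u
  | node1 (a : Agent) (s₁ s₂ : StratProf Agent) (u : Agent → ℝ) :
      UtilR s₁ u → UtilR (nodeP a Choice.one s₁ s₂) u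
  | node2 (a : Agent) (s₁ s₂ : StratProf Agent) (u : Agent → ℝ) :
      UtilR s₂ u → UtilR (nodeP a Choice.two s₁ s₂) u

open Classical in
/-- The utility assignment `ŝ` (an arbitrary default on non-convergent
profiles). -/
def util {Agent : Type} (s : StratProf Agent) : Agent → ℝ :=
  if h : ∃ u, UtilR s u then h.choose else fun _ => 0

/-- `□P`, the coinductive `always` modality: `P` holds at every position of
the strategy profile (greatest fixed point). -/
def Always {Agent : Type} (P : StratProf Agent → Prop) (s : StratProf Agent) : Prop :=
  ∃ R : StratProf Agent → Prop, R s ∧ ∀ t, R t →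
    P t ∧ ∀ a c s₁ s₂, t = nodeP a c s₁ s₂ → R s₁ ∧ R s₂

/-- `PE s`: `s` is always-convergent and the choice at the root of `s` is at
least as good, for the agent who owns the root, as the other choice. -/
def PE {Agent : Type} (s : StratProf Agent) : Prop :=
  Always Conv s ∧
    (∀ a s₁ s₂, s = nodeP a Choice.one s₁ s₂ → util s₁ a ≥ util s₂ a) ∧
    (∀ a s₁ s₂, s = nodeP a Choice.two s₁ s₂ → util s₂ a ≥ util s₁ a)

/-- Subgame perfect equilibrium: `□PE`. -/
def SPE {Agent : Type} : StratProf Agent → Prop :=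
  Always PE

/-- `s =_g s'`: the two strategy profiles have the same underlying game
(coinductive definition). -/
def SameGame {Agent : Type} (s s' : StratProf Agent) : Prop :=
  ∃ R : StratProf Agent → StratProf Agent → Prop, R s s' ∧ ∀ t t', R t t' →
    (∃ u, t = leafP u ∧ t' = leafP u) ∨
    (∃ a c c' s₁ s₂ s₁' s₂',
      t = nodeP a c s₁ s₂ ∧ t' = nodeP a c' s₁' s₂' ∧ R s₁ s₁' ∧ R s₂ s₂')

/-- `Rat_∞`: rationality for finite or infinite strategy profiles
(coinductive definition). -/
def RatInf {Agent : Type} (s : StratProf Agent) : Prop :=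
  ∃ R : StratProf Agent → Prop, R s ∧ ∀ t, R t →
    (∃ u, t = leafP u) ∨
    (∃ a c s₁ s₂ s₁' s₂', t = nodeP a c s₁ s₂ ∧
      SameGame (nodeP a c s₁' s₂') (nodeP a c s₁ s₂) ∧
      SPE (nodeP a c s₁' s₂') ∧ R (cchild c s₁ s₂))

/-- `diverg`: following the choices never reaches an ending position
(coinductive definition). -/
def Diverg {Agent : Type} (s : StratProf Agent) : Prop :=
  ∃ R : StratProf Agent → Prop, R s ∧ ∀ t, R t →
    ∃ a c s₁ s₂, t = nodeP a c s₁ s₂ ∧ R (cchild c s₁ s₂)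

/-- Utilities of the leaf reached when Alice takes at her `n`-th position of
the ∞pede: `A ↦ 2^(2n+2)`, `B ↦ 2^(2n)`. -/
def uAp (n : ℕ) : Ag → ℝ := fun x =>
  match x with
  | Ag.A => (2 : ℝ) ^ (2 * n + 2)
  | Ag.B => (2 : ℝ) ^ (2 * n)

/-- Utilities of the leaf reached when Bob takes at his `n`-th position of
the ∞pede: `A ↦ 2^(2n+1)`, `B ↦ 2^(2n+3)`. -/
def uBp (n : ℕ) : Ag → ℝ := fun x =>
  match x with
  | Ag.A => (2 : ℝ) ^ (2 * n + 1)
  | Ag.B => (2 : ℝ) ^ (2 * n + 3)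

/-- States for the mutual corecursion defining the `always take` profiles
`p_n` and `π_n` of the ∞pede. -/
inductive PedSt : Type
  | pS (n : ℕ)
  | piS (n : ℕ)
  | lS (u : Ag → ℝ)

/-- One step of the corecursion: `p_n = ⟨A, 1, ⟨A↦2^(2n+2), B↦2^(2n)⟩, π_n⟩`
and `π_n = ⟨B, 1, ⟨A↦2^(2n+1), B↦2^(2n+3)⟩, p_{n+1}⟩`. -/
def pedStep : PedSt → (SPF Ag).Obj PedSt
  | PedSt.lS u => ⟨Sum.inl u, fun e => Empty.elim e⟩
  | PedSt.pS n =>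
      ⟨Sum.inr (Ag.A, Choice.one), fun b => bif b then PedSt.piS n else PedSt.lS (uAp n)⟩
  | PedSt.piS n =>
      ⟨Sum.inr (Ag.B, Choice.one), fun b => bif b then PedSt.pS (n + 1) else PedSt.lS (uBp n)⟩

/-- The ∞pede profile `p_n` where both agents always take. -/
def pped (n : ℕ) : StratProf Ag :=
  PFunctor.M.corec pedStep (PedSt.pS n)

/-- The ∞pede profile `π_n` where both agents always take. -/
def piped (n : ℕ) : StratProf Ag :=
  PFunctor.M.corec pedStep (PedSt.piS n)

/-! At the root Alice pushes, so subgame perfection requires pushing to be at least as good for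
her as taking. But Bob takes right after, which leaves her `2^(2n+1) < 2^(2n+2)`. -/

section Profiles

variable {Agent : Type}

theorem leafP_injective : Function.Injective (leafP : (Agent → ℝ) → StratProf Agent) := by
  intro u v h
  have h' := congrArg PFunctor.M.dest h
  erw [leafP, leafP, PFunctor.M.dest_mk, PFunctor.M.dest_mk] at h'
  exact Sum.inl.inj (congrArg Sigma.fst h')

theorem leafP_ne_nodeP (u : Agent → ℝ) (a : Agent) (c : Choice) (s₁ s₂ : StratProf Agent) :
    leafP u ≠ nodeP a c s₁ s₂ := by
  intro h
  have h' := congrArg PFunctor.M.dest h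
  erw [leafP, nodeP, PFunctor.M.dest_mk, PFunctor.M.dest_mk] at h'
  exact Sum.inl_ne_inr (congrArg Sigma.fst h')

theorem nodeP_inj {a a' : Agent} {c c' : Choice} {s₁ s₂ s₁' s₂' : StratProf Agent}
    (h : nodeP a c s₁ s₂ = nodeP a' c' s₁' s₂') :
    a = a' ∧ c = c' ∧ s₁ = s₁' ∧ s₂ = s₂' := by
  have h' := congrArg PFunctor.M.dest h
  erw [nodeP, nodeP, PFunctor.M.dest_mk, PFunctor.M.dest_mk] at h'
  obtain ⟨hac, hchildren⟩ := Sigma.mk.inj_iff.mp h'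
  obtain ⟨rfl, rfl⟩ := Prod.mk.inj (Sum.inr.inj hac)
  have hchildren := eq_of_heq hchildren
  exact ⟨rfl, rfl, congrFun hchildren false, congrFun hchildren true⟩

theorem utilR_leafP_iff {u v : Agent → ℝ} : UtilR (leafP u) v ↔ v = u := by
  refine ⟨fun h => ?_, fun h => h ▸ UtilR.leaf u⟩
  generalize ht : leafP u = t at h
  cases h with
  | leaf w => exact leafP_injective ht.symm
  | node1 a s₁ s₂ => exact absurd ht (leafP_ne_nodeP _ _ _ _ _)
  | node2 a s₁ s₂ => exact absurd ht (leafP_ne_nodeP _ _ _ _ _)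

theorem utilR_nodeP_one_iff {a : Agent} {s₁ s₂ : StratProf Agent} {u : Agent → ℝ} :
    UtilR (nodeP a Choice.one s₁ s₂) u ↔ UtilR s₁ u := by
  refine ⟨fun h => ?_, UtilR.node1 a s₁ s₂ u⟩
  generalize ht : nodeP a Choice.one s₁ s₂ = t at h
  cases h with
  | leaf w => exact absurd ht.symm (leafP_ne_nodeP _ _ _ _ _)
  | node1 a' s₁' s₂' w hw => exact (nodeP_inj ht).2.2.1 ▸ hw
  | node2 a' s₁' s₂' w hw => exact absurd (nodeP_inj ht).2.1 Choice.noConfusion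

theorem util_leafP (u : Agent → ℝ) : util (leafP u) = u := by
  have hex : ∃ v, UtilR (leafP u) v := ⟨u, UtilR.leaf u⟩
  rw [util, dif_pos hex]
  exact utilR_leafP_iff.mp hex.choose_spec

theorem util_nodeP_one (a : Agent) (s₁ s₂ : StratProf Agent) :
    util (nodeP a Choice.one s₁ s₂) = util s₁ := by
  have hgraph : UtilR (nodeP a Choice.one s₁ s₂) = UtilR s₁ :=
    funext fun _ => propext utilR_nodeP_one_iff
  rw [util, util, hgraph]

theorem Always.root {P : StratProf Agent → Prop} {s : StratProf Agent} (h : Always P s) : P s :=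
  let ⟨_, hs, hR⟩ := h
  (hR _ hs).1

end Profiles

theorem uBp_A_lt_uAp_A (n : ℕ) : uBp n Ag.A < uAp n Ag.A :=
  pow_lt_pow_right₀ one_lt_two (by omega)

/-- In a subgame perfect equilibrium of the ∞pede, no strategy subprofile has
the current agent choosing 2 (push) while the next agent chooses 1 (take):
there is no profile
`s_n = ⟨A, 2, ⟨A↦2^(2n+2), B↦2^(2n)⟩, ⟨B, 1, ⟨A↦2^(2n+1), B↦2^(2n+3)⟩, σ_n⟩⟩`
with `SPE(s_n)`. -/
theorem no_push_then_take_spe :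
    ¬ ∃ (n : ℕ) (σ : StratProf Ag),
      SPE (nodeP Ag.A Choice.two (leafP (uAp n))
        (nodeP Ag.B Choice.one (leafP (uBp n)) σ)) := by
  rintro ⟨n, σ, hspe⟩
  have hpush : util (nodeP Ag.B Choice.one (leafP (uBp n)) σ) Ag.A ≥ util (leafP (uAp n)) Ag.A :=
    (Always.root hspe : PE _).2.2 _ _ _ rfl
  rw [util_nodeP_one, util_leafP, util_leafP] at hpush
  exact (uBp_A_lt_uAp_A n).not_ge hpush
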